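/- If the signed graph Σ_B associated to a bidirected graph B is antibalanced, then B can be obtained from a uniformly bidirected graph by reorienting a subset of edges. -/

import Mathlib

/-- The product of edge signs along a walk in a graph with edge signature `σ`. -/
def walkSign {V : Type*} (σ : V → V → ℤˣ) {G : SimpleGraph V} {u v : V}
    (w : G.Walk u v) : ℤˣ :=
  (w.darts.map (fun d => σ d.toProd.1 d.toProd.2)).prod

section Aux

open SimpleGraph

variable {V : Type*} {G : SimpleGraph V}

lemma walkSign_cons (σ : V → V → ℤˣ) {u v w : V} (h : G.Adj u v) (p : G.Walk v w) :
    walkSign σ (Walk.cons h p) = σ u v * walkSign σ p := by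
  simp [walkSign]

lemma walkSign_append (σ : V → V → ℤˣ) {u v w : V} (p : G.Walk u v) (q : G.Walk v w) :
    walkSign σ (p.append q) = walkSign σ p * walkSign σ q := by
  simp [walkSign, Walk.darts_append]

lemma walkSign_reverse (σ : V → V → ℤˣ) (hsym : ∀ a b, σ a b = σ b a) {u v : V}
    (p : G.Walk u v) : walkSign σ p.reverse = walkSign σ p := by
  unfold walkSign
  rw [Walk.darts_reverse, List.map_reverse, List.prod_reverse, List.map_map]
  congr 1
  apply List.map_congr_left
  intro d _
  exact hsym d.toProd.2 d.toProd.1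

lemma walkSign_copy (σ : V → V → ℤˣ) {u v u' v' : V} (p : G.Walk u v)
    (hu : u = u') (hv : v = v') :
    walkSign σ (p.copy hu hv) = walkSign σ p := by
  subst hu; subst hv; rfl

/-- If the sign of every cycle is `1`, then the sign of every closed walk is `1`. -/
lemma closedWalkSign (σ : V → V → ℤˣ) (hsym : ∀ a b, σ a b = σ b a)
    (hcyc : ∀ (v : V) (w : G.Walk v v), w.IsCycle → walkSign σ w = 1) :
    ∀ (n : ℕ) (v : V) (w : G.Walk v v), w.length = n → walkSign σ w = 1 := by
  classical
  intro n
  induction n using Nat.strong_induction_on with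
  | _ n IH =>
  intro v w hn
  rcases Nat.eq_zero_or_pos n with rfl | hpos
  · cases w with
    | nil => rfl
    | cons h p => simp at hn
  by_cases hnd : w.support.tail.Nodup
  · -- no repeated vertex: degenerate closed walk or genuine cycle
    cases w with
    | nil => rfl
    | @cons _ u _ hadj p =>
      -- hadj : G.Adj v u, p : G.Walk u v
      have hp : p.IsPath := by
        rw [Walk.isPath_def]
        simpa using hnd
      by_cases he : s(v, u) ∈ p.edges
      · -- the edge back occurs in the path: w is a doubled edge
        cases p with
        | nil => exact absurd rfl hadj.ne
        | @cons _ y _ h2 q =>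
          rw [Walk.edges_cons, List.mem_cons] at he
          rcases he with heq | hq
          · have hvy : v = y := by
              rcases Sym2.eq_iff.mp heq with ⟨h1, _⟩ | ⟨h1, _⟩
              · exact absurd h1 hadj.ne
              · exact h1
            subst hvy
            -- q : Walk v v, a shorter closed walk
            have hql : q.length < n := by
              rw [← hn]; simp only [Walk.length_cons]; omega
            have hq1 : walkSign σ q = 1 := IH q.length hql v q rfl
            rw [walkSign_cons, walkSign_cons, hq1, mul_one, hsym u v]
            exact Int.units_mul_self _
          · -- the edge occurs deeper in the path: contradicts path property
            have hmem : u ∈ q.support := q.snd_mem_support_of_mem_edges hq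
            have := (Walk.cons_isPath_iff h2 q).mp hp
            exact absurd hmem this.2
      · -- w is a cycle
        exact hcyc _ _ ((Walk.cons_isCycle_iff p hadj).mpr ⟨hp, he⟩)
  · -- a repeated vertex: split into two shorter closed walks
    obtain ⟨x, hdup⟩ := List.exists_duplicate_iff_not_nodup.mpr hnd
    have hcount : 2 ≤ w.support.tail.count x := List.duplicate_iff_two_le_count.mp hdup
    have hx : x ∈ w.support := List.mem_of_mem_tail hdup.mem
    have hsign : walkSign σ (w.rotate x hx) = walkSign σ w :=
      (((Walk.rotate_darts w x hx).map _).perm.prod_eq)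
    have hlen : (w.rotate x hx).length = n := by
      have h1 := (Walk.rotate_darts w x hx).perm.length_eq
      rw [Walk.length_darts, Walk.length_darts] at h1
      rw [h1, hn]
    have hcountc : 2 ≤ (w.rotate x hx).support.tail.count x := by
      rw [(Walk.support_rotate w x hx).perm.count_eq]
      exact hcount
    rw [← hsign]
    -- now handle the rotated walk generically
    revert hlen hcountc
    generalize w.rotate x hx = c
    intro hlen hcountc
    cases c with
    | nil => simp at hcountc
    | @cons _ y _ hadj p =>
      -- hadj : G.Adj x y, p : G.Walk y x
      have hxp : x ∈ p.support := by
        have h2 : 2 ≤ p.support.count x := by simpa using hcountc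
        exact List.count_pos_iff.mp (by omega)
      have hspec : (p.takeUntil x hxp).append (p.dropUntil x hxp) = p := p.take_spec hxp
      have hlens : (p.takeUntil x hxp).length + (p.dropUntil x hxp).length = p.length := by
        have := congrArg Walk.length hspec
        rwa [Walk.length_append] at this
      have hq2 : 1 ≤ (p.dropUntil x hxp).length := by
        have h1 : (p.takeUntil x hxp).support.count x = 1 :=
          p.count_support_takeUntil_eq_one hxp
        have h2 : p.support.count x =
            (p.takeUntil x hxp).support.count x +
              (p.dropUntil x hxp).support.tail.count x := by
          conv_lhs => rw [← hspec]
          rw [Walk.support_append, List.count_append]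
        have h3 : 2 ≤ p.support.count x := by simpa using hcountc
        have h4 : 1 ≤ (p.dropUntil x hxp).support.tail.count x := by omega
        have h5 := List.count_le_length (a := x) (l := (p.dropUntil x hxp).support.tail)
        have h6 : (p.dropUntil x hxp).support.tail.length = (p.dropUntil x hxp).length := by
          rw [List.length_tail, Walk.length_support]; omega
        omega
      have hplen : p.length + 1 = n := by rw [← hlen]; simp [Walk.length_cons]
      have s1 : walkSign σ (Walk.cons hadj (p.takeUntil x hxp)) = 1 :=
        IH ((p.takeUntil x hxp).length + 1) (by omega) x _ (by simp [Walk.length_cons])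
      have s2 : walkSign σ (p.dropUntil x hxp) = 1 :=
        IH ((p.dropUntil x hxp).length) (by omega) x _ rfl
      rw [walkSign_cons] at s1 ⊢
      conv_lhs => rw [← hspec]
      rw [walkSign_append, ← mul_assoc, s1, s2, one_mul]

/-- A symmetric signature all of whose cycles are positive is a coboundary. -/
lemma exists_potential (σ : V → V → ℤˣ) (hsym : ∀ a b, σ a b = σ b a)
    (hcyc : ∀ (v : V) (w : G.Walk v v), w.IsCycle → walkSign σ w = 1) :
    ∃ s : V → ℤˣ, ∀ u v, G.Adj u v → σ u v = s u * s v := by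
  classical
  have hout : ∀ v : V, G.connectedComponentMk ((G.connectedComponentMk v).out) =
      G.connectedComponentMk v := fun v => (G.connectedComponentMk v).out_eq
  have hreach : ∀ v : V, G.Reachable ((G.connectedComponentMk v).out) v := fun v =>
    ConnectedComponent.exact (hout v)
  refine ⟨fun v => walkSign σ (hreach v).some, ?_⟩
  intro u v huv
  have hroot : (G.connectedComponentMk v).out = (G.connectedComponentMk u).out := by
    rw [ConnectedComponent.connectedComponentMk_eq_of_adj huv]
  show (fun a b => σ a b) u v =
    walkSign σ (hreach u).some * walkSign σ (hreach v).some
  simp only []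
  set wu : G.Walk ((G.connectedComponentMk u).out) u := (hreach u).some with hwu
  set wv0 : G.Walk ((G.connectedComponentMk v).out) v := (hreach v).some with hwv0
  have hclosed := closedWalkSign σ hsym hcyc _ _
    (wu.append (Walk.cons huv (wv0.copy hroot rfl).reverse)) rfl
  rw [walkSign_append, walkSign_cons, walkSign_reverse σ hsym, walkSign_copy] at hclosed
  -- hclosed : walkSign σ wu * (σ u v * walkSign σ wv0) = 1
  rcases Int.units_eq_one_or (walkSign σ wu) with h1 | h1 <;>
    rcases Int.units_eq_one_or (walkSign σ wv0) with h2 | h2 <;>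
    rcases Int.units_eq_one_or (σ u v) with h3 | h3 <;>
    rw [h1, h2, h3] at hclosed ⊢ <;> revert hclosed <;> decide

end Aux

/-- If the signed graph `σ_B u v = -(β u v * β v u)` associated to a bidirected graph is
    antibalanced, then the bidirection is obtained from a uniformly bidirected graph by
    reorienting (negating both end-signs of) a subset of edges. -/
theorem antibalanced_implies_uniform_up_to_reorientation {V : Type*} (G : SimpleGraph V)
    (β : V → V → ℤˣ)
    (hab : ∀ (v : V) (w : G.Walk v v), w.IsCycle →
      walkSign (fun a b => -(β a b * β b a)) w = (-1) ^ w.length) :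
    ∃ β' : V → V → ℤˣ,
      (∀ u : V, (∀ v, G.Adj u v → β' u v = 1) ∨ (∀ v, G.Adj u v → β' u v = -1)) ∧
      (∀ u v : V, G.Adj u v →
        (β u v = β' u v ∧ β v u = β' v u) ∨ (β u v = -β' u v ∧ β v u = -β' v u)) := by
  classical
  have hnegprod : ∀ (l : List G.Dart),
      (l.map fun d => -(β d.toProd.1 d.toProd.2 * β d.toProd.2 d.toProd.1)).prod =
        (-1 : ℤˣ) ^ l.length *
          (l.map fun d => β d.toProd.1 d.toProd.2 * β d.toProd.2 d.toProd.1).prod := by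
    intro l
    induction l with
    | nil => simp
    | cons a l ih =>
      simp only [List.map_cons, List.prod_cons, List.length_cons, ih, pow_succ]
      simp [mul_comm, mul_left_comm, mul_assoc]
  have hcyc : ∀ (v : V) (w : G.Walk v v), w.IsCycle →
      walkSign (fun a b => β a b * β b a) w = 1 := by
    intro v w hw
    have h1 := hab v w hw
    have h2 : (w.darts.map fun d =>
        -(β d.toProd.1 d.toProd.2 * β d.toProd.2 d.toProd.1)).prod = (-1 : ℤˣ) ^ w.length := by
      simpa [walkSign] using h1
    rw [hnegprod w.darts, SimpleGraph.Walk.length_darts] at h2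
    have h3 : (w.darts.map fun d =>
        β d.toProd.1 d.toProd.2 * β d.toProd.2 d.toProd.1).prod = 1 := by
      exact mul_left_cancel (h2.trans (mul_one _).symm)
    simpa [walkSign] using h3
  obtain ⟨s, hs⟩ := exists_potential (G := G) (fun a b => β a b * β b a)
    (fun a b => mul_comm _ _) hcyc
  refine ⟨fun u _ => s u, ?_, ?_⟩
  · intro u
    rcases Int.units_eq_one_or (s u) with h | h
    · left; intro v _; exact h
    · right; intro v _; exact h
  · intro u v huv
    have h1 : β u v * β v u = s u * s v := hs u v huv
    show (β u v = s u ∧ β v u = s v) ∨ (β u v = -s u ∧ β v u = -s v)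
    rcases Int.units_eq_one_or (β u v) with ha | ha <;>
      rcases Int.units_eq_one_or (β v u) with hb | hb <;>
      rcases Int.units_eq_one_or (s u) with hc | hc <;>
      rcases Int.units_eq_one_or (s v) with hd | hd <;>
      rw [ha, hb, hc, hd] at h1 ⊢ <;> revert h1 <;> decide
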